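/- arXiv:1004.2126 — 8 statements merged into one kernel-verified Lean document; each statement's English description precedes it below -/
import Mathlib

section
/- Let X be a compact metric space, n ≥ 2 an integer, and f, h : X → X homeomorphisms satisfying h ∘ f ∘ h⁻¹ = fⁿ. If the fixed-point set fix(f) is nonempty, then there exists a BS-minimal set M contained in fix(f); moreover this set M is also an h-minimal set. -/
/-!
If `f x = x` then `h (f (h⁻¹ x)) = fⁿ x = x`, so `h⁻¹` maps `fix(f)` into itself. By Zorn's lemma
and compactness, the closed set `fix(f)` contains a set `M` minimal among nonempty closed sets
mapped into themselves by `h⁻¹`; minimality forces `h⁻¹(M) = M`, so `M` is `h`-minimal. As `f` is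
the identity on `M`, the `f`-invariance required of a BS-minimal set is automatic.
-/

/-- A `BS`-minimal set for the action generated by `f` and `h`: a nonempty closed set,
invariant under both `f` and `h`, containing no proper nonempty closed subset invariant
under both `f` and `h`. -/
def IsBSMinimal {X : Type*} [TopologicalSpace X] (f h : X → X) (M : Set X) : Prop :=
  M.Nonempty ∧ IsClosed M ∧ f '' M = M ∧ h '' M = M ∧
    ∀ K ⊆ M, K.Nonempty → IsClosed K → f '' K = K → h '' K = K → K = M

/-- A minimal set for a single map `g`: a nonempty closed `g`-invariant set containing
no proper nonempty closed `g`-invariant subset. -/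
def IsMinimalFor {X : Type*} [TopologicalSpace X] (g : X → X) (M : Set X) : Prop :=
  M.Nonempty ∧ IsClosed M ∧ g '' M = M ∧
    ∀ K ⊆ M, K.Nonempty → IsClosed K → g '' K = K → K = M

open Set Function

section MinimalSets

variable {X : Type*} [TopologicalSpace X] {g : X → X} {S : Set X}

theorem IsClosed.exists_minimal_nonempty_closed_mapsTo_subset [CompactSpace X]
    (hS : IsClosed S) (hne : S.Nonempty) (hgS : MapsTo g S S) :
    ∃ M ⊆ S, M.Nonempty ∧ IsClosed M ∧ MapsTo g M M ∧
      ∀ K ⊆ M, K.Nonempty → IsClosed K → MapsTo g K K → K = M := by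
  let P : Set (Set X) := {C | C.Nonempty ∧ IsClosed C ∧ MapsTo g C C}
  have chain_bound : ∀ c ⊆ P, IsChain (· ⊆ ·) c → c.Nonempty → ∃ lb ∈ P, ∀ s ∈ c, lb ⊆ s := by
    intro c hcP hc hcne
    have hclosed : ∀ C ∈ c, IsClosed C := fun C hC => (hcP hC).2.1
    have := hcne.to_subtype
    have hdir : DirectedOn (· ⊇ ·) c := IsChain.directedOn (r := fun A B : Set X => A ⊇ B) hc.symm
    refine ⟨⋂₀ c, ⟨?_, isClosed_sInter hclosed, ?_⟩, fun C hC => sInter_subset_of_mem hC⟩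
    · exact IsCompact.nonempty_sInter_of_directed_nonempty_isCompact_isClosed hdir
        (fun C hC => (hcP hC).1) (fun C hC => (hclosed C hC).isCompact) hclosed
    · exact mapsTo_sInter.2 fun C hC => (hcP hC).2.2.mono_left (sInter_subset_of_mem hC)
  obtain ⟨M, hMS, hM⟩ := zorn_superset_nonempty P chain_bound S ⟨hne, hS, hgS⟩
  exact ⟨M, hMS, hM.prop.1, hM.prop.2.1, hM.prop.2.2,
    fun K hKM hKne hK hgK => hM.eq_of_subset ⟨hKne, hK, hgK⟩ hKM⟩

theorem IsClosed.exists_isMinimalFor_subset [CompactSpace X] (hg : IsClosedMap g)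
    (hS : IsClosed S) (hne : S.Nonempty) (hgS : MapsTo g S S) :
    ∃ M ⊆ S, IsMinimalFor g M := by
  obtain ⟨M, hMS, hMne, hM, hgM, hmin⟩ := hS.exists_minimal_nonempty_closed_mapsTo_subset hne hgS
  have himage : g '' M = M :=
    hmin _ hgM.image_subset (hMne.image g) (hg _ hM) ((mapsTo_image g M).mono_left hgM.image_subset)
  exact ⟨M, hMS, hMne, hM, himage,
    fun K hKM hKne hK hgK => hmin K hKM hKne hK ((mapsTo_image g K).mono_right hgK.subset)⟩

theorem IsMinimalFor.of_symm {e : X ≃ X} {M : Set X} (hM : IsMinimalFor e.symm M) :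
    IsMinimalFor e M := by
  have image_iff : ∀ K : Set X, e.symm '' K = K ↔ e '' K = K := fun K => by
    rw [← Equiv.eq_image_iff_symm_image_eq, eq_comm]
  obtain ⟨hMne, hM, heM, hmin⟩ := hM
  exact ⟨hMne, hM, (image_iff M).1 heM,
    fun K hKM hKne hK heK => hmin K hKM hKne hK ((image_iff K).2 heK)⟩

theorem IsMinimalFor.isBSMinimal_of_subset_fixedPoints {f h : X → X} {M : Set X}
    (hM : IsMinimalFor h M) (hMf : M ⊆ fixedPoints f) : IsBSMinimal f h M := by
  obtain ⟨hMne, hM, hhM, hmin⟩ := hM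
  exact ⟨hMne, hM, EqOn.image_eq_self fun x hx => hMf hx, hhM,
    fun K hKM hKne hK _ hhK => hmin K hKM hKne hK hhK⟩

end MinimalSets

theorem mapsTo_symm_fixedPoints_of_conj_eq_iterate {X : Type*} {f : X → X} {h : X ≃ X} {n : ℕ}
    (hrel : ∀ x, h (f (h.symm x)) = f^[n] x) : MapsTo h.symm (fixedPoints f) (fixedPoints f) :=
  fun x hx => h.injective <| by rw [hrel, hx.iterate n, h.apply_symm_apply]

theorem bs_minimal_set_in_fixed_points_general
    {X : Type*} [MetricSpace X] [CompactSpace X]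
    (n : ℕ) (f h : X ≃ₜ X)
    (hrel : ∀ x : X, h (f (h.symm x)) = (⇑f)^[n] x)
    (hfix : {x : X | f x = x}.Nonempty) :
    ∃ M : Set X, IsBSMinimal (⇑f) (⇑h) M ∧ M ⊆ {x : X | f x = x} ∧
      IsMinimalFor (⇑h) M := by
  obtain ⟨M, hMf, hM⟩ := (isClosed_fixedPoints f.continuous).exists_isMinimalFor_subset
    h.symm.isClosedMap hfix (mapsTo_symm_fixedPoints_of_conj_eq_iterate (h := h.toEquiv) hrel)
  have hMh : IsMinimalFor h M := IsMinimalFor.of_symm (e := h.toEquiv) hM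
  exact ⟨M, hMh.isBSMinimal_of_subset_fixedPoints hMf, hMf, hMh⟩

/-- if `fix(f)` is nonempty, there is a BS-minimal set contained in `fix(f)`
which moreover is an `h`-minimal set. -/
theorem bs_minimal_set_in_fixed_points
    {X : Type*} [MetricSpace X] [CompactSpace X]
    (n : ℕ) (hn : 2 ≤ n) (f h : X ≃ₜ X)
    (hrel : ∀ x : X, h (f (h.symm x)) = (⇑f)^[n] x)
    (hfix : {x : X | f x = x}.Nonempty) :
    ∃ M : Set X, IsBSMinimal (⇑f) (⇑h) M ∧ M ⊆ {x : X | f x = x} ∧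
      IsMinimalFor (⇑h) M :=
  bs_minimal_set_in_fixed_points_general n f h hrel hfix
end

section
/- Let X be a compact metric space, n ≥ 2 an integer, and f, h : X → X homeomorphisms satisfying h ∘ f ∘ h⁻¹ = fⁿ. If M is a BS-minimal set with M ∩ fix(f) ≠ ∅, then M ⊆ fix(f). -/
open Function Set

theorem isFixedPt_of_semiconj_iterate {X : Type*} {f h : X → X} {n : ℕ} (hh : Injective h)
    (hsc : Semiconj h f f^[n]) {x : X} (hx : IsFixedPt f (h x)) : IsFixedPt f x :=
  hh <| by rw [hsc x, (hx.iterate n).eq]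

theorem exists_nonempty_isClosed_subset_preimage_eq {X : Type*} [TopologicalSpace X]
    [CompactSpace X] {g : X → X} (hg : Continuous g) (hsurj : Surjective g) {K : Set X}
    (hK : IsClosed K) (hne : K.Nonempty) (hgK : g ⁻¹' K ⊆ K) :
    ∃ L ⊆ K, L.Nonempty ∧ IsClosed L ∧ g ⁻¹' L = L := by
  set S : ℕ → Set X := fun m => g^[m] ⁻¹' K
  have hS_anti : Antitone S := antitone_nat_of_succ_le fun m => by
    simp only [S, iterate_succ', preimage_comp]
    exact preimage_mono hgK
  have hS_closed : ∀ m, IsClosed (S m) := fun m => hK.preimage (hg.iterate m)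
  have hS_ne : ∀ m, (S m).Nonempty := fun m => hne.preimage (hsurj.iterate m)
  refine ⟨⋂ m, S m, iInter_subset S 0, ?_, isClosed_iInter hS_closed, ?_⟩
  · exact IsCompact.nonempty_iInter_of_directed_nonempty_isCompact_isClosed S
      hS_anti.directed_ge hS_ne (fun m => (hS_closed m).isCompact) hS_closed
  · simp only [preimage_iInter, S, ← preimage_comp, ← iterate_succ]
    exact hS_anti.iInter_nat_add 1

theorem bs_minimal_meeting_fix_subset_fix_general
    {X : Type*} [MetricSpace X] [CompactSpace X]
    (n : ℕ) (f h : X ≃ₜ X)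
    (hrel : ∀ x : X, h (f (h.symm x)) = (⇑f)^[n] x)
    (M : Set X) (hM : IsBSMinimal (⇑f) (⇑h) M)
    (hmeet : (M ∩ {x : X | f x = x}).Nonempty) :
    M ⊆ {x : X | f x = x} := by
  obtain ⟨-, hM_closed, -, hM_h, hM_min⟩ := hM
  have hsc : Semiconj h f f^[n] := fun y => by simpa using hrel (h y)
  have hM_h' : ⇑h ⁻¹' M = M := by
    nth_rw 1 [← hM_h]
    exact h.preimage_image M
  have hK : ⇑h ⁻¹' (M ∩ fixedPoints f) ⊆ M ∩ fixedPoints f := fun x ⟨hxM, hxf⟩ =>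
    ⟨hM_h'.subset hxM, isFixedPt_of_semiconj_iterate h.injective hsc hxf⟩
  obtain ⟨L, hLK, hL_ne, hL_closed, hL_h⟩ := exists_nonempty_isClosed_subset_preimage_eq
    h.continuous h.surjective (hM_closed.inter (isClosed_fixedPoints f.continuous)) hmeet hK
  have hL_f : ⇑f '' L = L := EqOn.image_eq_self fun x hx => (hLK hx).2
  have hLM : L = M := hM_min L (hLK.trans inter_subset_left) hL_ne hL_closed hL_f
    (hL_h ▸ image_preimage_eq L h.surjective :)
  exact hLM ▸ hLK.trans inter_subset_right

/-- a BS-minimal set meeting `fix(f)` is contained in `fix(f)`. -/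
theorem bs_minimal_meeting_fix_subset_fix
    {X : Type*} [MetricSpace X] [CompactSpace X]
    (n : ℕ) (hn : 2 ≤ n) (f h : X ≃ₜ X)
    (hrel : ∀ x : X, h (f (h.symm x)) = (⇑f)^[n] x)
    (M : Set X) (hM : IsBSMinimal (⇑f) (⇑h) M)
    (hmeet : (M ∩ {x : X | f x = x}).Nonempty) :
    M ⊆ {x : X | f x = x} :=
  bs_minimal_meeting_fix_subset_fix_general n f h hrel M hM hmeet
end

section
/- Let X be a compact metric space, n ≥ 2 an integer, and f, h : X → X homeomorphisms satisfying h ∘ f ∘ h⁻¹ = fⁿ. If the set per(f) of periodic points of f is nonempty, then there exist a positive integer N and a BS-minimal set M such that M ⊆ fix(f^N). -/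
/-!
Let `p` be a period of some point and `F = fix(f^p)`. From `h ∘ f = f^n ∘ h` one gets
`h (f^p y) = f^(np) (h y)`, so `h y ∈ F` forces `h (f^p y) = h y`, i.e. `h⁻¹ F ⊆ F`.
Hence `Λ = ⋂ₖ h⁻ᵏ F` is a decreasing intersection of nonempty closed sets, so it is nonempty
by compactness; it is invariant under `h`, and under `f` because `hᵏ ∘ f = f^(nᵏ) ∘ hᵏ`.
Zorn's lemma yields a BS-minimal set inside `Λ ⊆ F`.
-/

open Function Set

theorem Function.Surjective.image_eq_self_of_preimage_eq_self {α : Type*} {f : α → α}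
    (hf : Surjective f) {s : Set α} (hs : f ⁻¹' s = s) : f '' s = s := by
  conv_lhs => rw [← hs]
  exact image_preimage_eq s hf

theorem Function.Bijective.image_sInter_eq_self {α : Type*} {f : α → α} (hf : Bijective f)
    {c : Set (Set α)} (hc : ∀ K ∈ c, f '' K = K) : f '' ⋂₀ c = ⋂₀ c := by
  rw [sInter_eq_biInter, image_iInter₂ hf]
  exact iInter₂_congr hc

theorem exists_isBSMinimal_subset {X : Type*} [TopologicalSpace X] [CompactSpace X]
    {f h : X → X} (hf : Bijective f) (hh : Bijective h) {A : Set X}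
    (hne : A.Nonempty) (hcl : IsClosed A) (hfA : f '' A = A) (hhA : h '' A = A) :
    ∃ M ⊆ A, IsBSMinimal f h M := by
  let S : Set (Set X) := {K | K.Nonempty ∧ IsClosed K ∧ f '' K = K ∧ h '' K = K}
  have chain_bound : ∀ c ⊆ S, IsChain (· ⊆ ·) c → c.Nonempty → ∃ lb ∈ S, ∀ K ∈ c, lb ⊆ K := by
    intro c hcS hchain hcne
    have : Nonempty c := hcne.to_subtype
    refine ⟨⋂₀ c, ⟨?_, isClosed_sInter fun K hK ↦ (hcS hK).2.1,
      hf.image_sInter_eq_self fun K hK ↦ (hcS hK).2.2.1,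
      hh.image_sInter_eq_self fun K hK ↦ (hcS hK).2.2.2⟩, fun K ↦ sInter_subset_of_mem⟩
    exact IsCompact.nonempty_sInter_of_directed_nonempty_isCompact_isClosed
      (fun K hK L hL ↦ (hchain.total hK hL).elim (fun hKL ↦ ⟨K, hK, subset_rfl, hKL⟩)
        fun hLK ↦ ⟨L, hL, hLK, subset_rfl⟩)
      (fun K hK ↦ (hcS hK).1) (fun K hK ↦ (hcS hK).2.1.isCompact) (fun K hK ↦ (hcS hK).2.1)
  obtain ⟨M, hMA, hmin⟩ := zorn_superset_nonempty S chain_bound A ⟨hne, hcl, hfA, hhA⟩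
  obtain ⟨hMne, hMcl, hfM, hhM⟩ := hmin.prop
  exact ⟨M, hMA, hMne, hMcl, hfM, hhM,
    fun K hKM hKne hKcl hfK hhK ↦ hmin.eq_of_subset ⟨hKne, hKcl, hfK, hhK⟩ hKM⟩

section Iterate

variable {X : Type*} {f h : X → X} {n : ℕ}

theorem Function.Semiconj.iterate_left_iterate_pow (hfh : Semiconj h f f^[n]) (k : ℕ) :
    Semiconj h^[k] f f^[n ^ k] := by
  have step : ∀ k, Semiconj h f^[n ^ k] f^[n ^ (k + 1)] := fun k ↦ by
    simpa only [← iterate_mul, pow_succ, mul_comm] using hfh.iterate_right (n ^ k)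
  simpa using Semiconj.iterate_left step k 0

theorem Function.Semiconj.preimage_fixedPoints_iterate_subset (hfh : Semiconj h f f^[n])
    (hinj : Injective h) (p : ℕ) : h ⁻¹' fixedPoints f^[p] ⊆ fixedPoints f^[p] := by
  intro y (hy : IsFixedPt f^[p] (h y))
  apply hinj
  calc h (f^[p] y) = (f^[n])^[p] (h y) := (hfh.iterate_right p).eq y
    _ = (f^[p])^[n] (h y) := by rw [← iterate_mul, ← iterate_mul, mul_comm]
    _ = h y := hy.iterate n

theorem Function.Injective.preimage_fixedPoints_iterate (hinj : Injective f) (p : ℕ) :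
    f ⁻¹' fixedPoints f^[p] = fixedPoints f^[p] := by
  ext y
  change f^[p] (f y) = f y ↔ f^[p] y = y
  rw [← iterate_succ_apply, iterate_succ_apply', hinj.eq_iff]

theorem antitone_preimage_iterate {A : Set X} (hA : h ⁻¹' A ⊆ A) :
    Antitone fun k ↦ h^[k] ⁻¹' A :=
  antitone_nat_of_succ_le fun k ↦ by
    rw [iterate_succ', preimage_comp]
    exact preimage_mono hA

theorem preimage_iInter_preimage_iterate {A : Set X} (hA : h ⁻¹' A ⊆ A) :
    h ⁻¹' ⋂ k, h^[k] ⁻¹' A = ⋂ k, h^[k] ⁻¹' A := by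
  simpa only [preimage_iInter, ← preimage_comp, ← iterate_succ]
    using (antitone_preimage_iterate hA).iInter_nat_add 1

theorem Function.Semiconj.preimage_iInter_preimage_iterate (hfh : Semiconj h f f^[n])
    {A : Set X} (hfA : f ⁻¹' A = A) : f ⁻¹' ⋂ k, h^[k] ⁻¹' A = ⋂ k, h^[k] ⁻¹' A := by
  have hfA' : ∀ m, f^[m] ⁻¹' A = A := fun m ↦ by
    rw [preimage_iterate_eq]
    exact iterate_fixed hfA m
  simp only [preimage_iInter, ← preimage_comp, (hfh.iterate_left_iterate_pow _).comp_eq]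
  simp only [preimage_comp, hfA']

theorem nonempty_iInter_preimage_iterate [TopologicalSpace X] [CompactSpace X]
    (hcont : Continuous h) (hsurj : Surjective h) {A : Set X} (hne : A.Nonempty)
    (hcl : IsClosed A) (hA : h ⁻¹' A ⊆ A) : (⋂ k, h^[k] ⁻¹' A).Nonempty :=
  IsCompact.nonempty_iInter_of_sequence_nonempty_isCompact_isClosed _
    (fun k ↦ antitone_preimage_iterate hA k.le_succ) (fun k ↦ hne.preimage (hsurj.iterate k))
    hcl.isCompact fun k ↦ hcl.preimage (hcont.iterate k)

end Iterate

theorem bs_minimal_set_in_periodic_points_general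
    {X : Type*} [MetricSpace X] [CompactSpace X]
    (n : ℕ) (f h : X ≃ₜ X)
    (hrel : ∀ x : X, h (f (h.symm x)) = (⇑f)^[n] x)
    (hper : ∃ x : X, ∃ p : ℕ, 1 ≤ p ∧ (⇑f)^[p] x = x) :
    ∃ N : ℕ, 1 ≤ N ∧ ∃ M : Set X, IsBSMinimal (⇑f) (⇑h) M ∧
      M ⊆ {x : X | (⇑f)^[N] x = x} := by
  obtain ⟨x, p, hp, hx⟩ := hper
  have hfh : Semiconj h f f^[n] := fun y ↦ by simpa using hrel (h y)
  have hxF : x ∈ fixedPoints f^[p] := hx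
  have hF : h ⁻¹' fixedPoints f^[p] ⊆ fixedPoints f^[p] :=
    hfh.preimage_fixedPoints_iterate_subset h.injective p
  have hFcl : IsClosed (fixedPoints f^[p]) := isClosed_fixedPoints (f.continuous.iterate p)
  obtain ⟨M, hMΛ, hM⟩ := exists_isBSMinimal_subset f.bijective h.bijective
    (nonempty_iInter_preimage_iterate h.continuous h.surjective ⟨x, hxF⟩ hFcl hF)
    (isClosed_iInter fun k ↦ hFcl.preimage (h.continuous.iterate k))
    (f.surjective.image_eq_self_of_preimage_eq_self
      (hfh.preimage_iInter_preimage_iterate (f.injective.preimage_fixedPoints_iterate p)))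
    (h.surjective.image_eq_self_of_preimage_eq_self (preimage_iInter_preimage_iterate hF))
  exact ⟨p, hp, M, hM, hMΛ.trans (iInter_subset _ 0)⟩

/-- if `per(f)` is nonempty, there exist `N ≥ 1` and a BS-minimal set `M`
with `M ⊆ fix(f^N)`. -/
theorem bs_minimal_set_in_periodic_points
    {X : Type*} [MetricSpace X] [CompactSpace X]
    (n : ℕ) (hn : 2 ≤ n) (f h : X ≃ₜ X)
    (hrel : ∀ x : X, h (f (h.symm x)) = (⇑f)^[n] x)
    (hper : ∃ x : X, ∃ p : ℕ, 1 ≤ p ∧ (⇑f)^[p] x = x) :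
    ∃ N : ℕ, 1 ≤ N ∧ ∃ M : Set X, IsBSMinimal (⇑f) (⇑h) M ∧
      M ⊆ {x : X | (⇑f)^[N] x = x} :=
  bs_minimal_set_in_periodic_points_general n f h hrel hper
end

section
/- Let X be a nonempty compact metric space, n ≥ 2 an integer, and f, h : X → X homeomorphisms satisfying h ∘ f ∘ h⁻¹ = fⁿ. Assume that every f-invariant Borel probability measure μ on X has support contained in fix(f). Then every BS-minimal set is contained in fix(f), and moreover every BS-minimal set is an h-minimal set. -/
open MeasureTheory Topology

/-- The topological support of a measure: points all of whose neighborhoods have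
positive measure. -/
def measSupport {X : Type*} [TopologicalSpace X] [MeasurableSpace X]
    (μ : Measure X) : Set X :=
  {x | ∀ U ∈ 𝓝 x, 0 < μ U}

/-!
An `f`-invariant measure supported on a BS-minimal set `M` exists by the Krylov–Bogolyubov
argument, so by hypothesis `F := M ∩ fix(f)` is nonempty. The relation `h f = fⁿ h` shows
`h⁻¹(F) ⊆ F`, hence `⋂ₖ h⁻ᵏ(F)` is a nonempty closed set invariant under `h` and fixed pointwise
by `f`; minimality forces it to be `M`. Once `f` is the identity on `M`, every closed
`h`-invariant subset of `M` is also `f`-invariant, so `M` is `h`-minimal.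
-/

open Filter Set Function
open scoped NNReal BoundedContinuousFunction

theorem birkhoffAverage_apply_eq_comp {R M α : Type*} [DivisionSemiring R] [AddCommMonoid M]
    [Module R M] (f : α → α) (g : α → M) (n : ℕ) (x : α) :
    birkhoffAverage R f g n (f x) = birkhoffAverage R f (g ∘ f) n x := by
  simp only [birkhoffAverage, birkhoffSum, comp_apply, ← iterate_succ_apply, iterate_succ_apply']

section KrylovBogolyubov

variable {X : Type*} [MeasurableSpace X]

theorem isProbabilityMeasure_birkhoffAverage_dirac (f : X → X) (x : X) {n : ℕ} (hn : n ≠ 0) :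
    IsProbabilityMeasure (birkhoffAverage ℝ≥0 f Measure.dirac n x) := by
  constructor
  simp only [birkhoffAverage, birkhoffSum, ENNReal.smul_def,
    ENNReal.coe_inv (Nat.cast_ne_zero.mpr hn), ENNReal.coe_natCast, Measure.smul_apply,
    Measure.coe_finsetSum, Finset.sum_apply, measure_univ, Finset.sum_const, Finset.card_range,
    nsmul_eq_mul, mul_one, smul_eq_mul]
  exact ENNReal.inv_mul_cancel (by exact_mod_cast hn) (ENNReal.natCast_ne_top n)

variable [TopologicalSpace X]

theorem integral_birkhoffAverage_dirac [OpensMeasurableSpace X] [MeasurableSingletonClass X]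
    (f : X → X) (x : X) (n : ℕ) (g : X →ᵇ ℝ) :
    ∫ y, g y ∂(birkhoffAverage ℝ≥0 f Measure.dirac n x) = birkhoffAverage ℝ f g n x := by
  rw [birkhoffAverage, integral_smul_nnreal_measure, birkhoffSum,
    integral_finsetSum_measure fun k _ => g.integrable _]
  simp [birkhoffAverage, birkhoffSum, integral_dirac, NNReal.smul_def]

/-- Krylov–Bogolyubov: any ultrafilter limit of the empirical measures along an orbit is
invariant, since `∫ g ∘ f - ∫ g` against the `n`-th one is `(g (fⁿ x) - g x) / n`. -/
theorem exists_isProbabilityMeasure_map_eq [T2Space X] [CompactSpace X] [HasOuterApproxClosed X]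
    [BorelSpace X] {f : X → X} (hf : Continuous f) (x : X) :
    ∃ μ : Measure X, IsProbabilityMeasure μ ∧ μ.map f = μ := by
  let ν : ℕ → ProbabilityMeasure X := fun n =>
    ⟨birkhoffAverage ℝ≥0 f Measure.dirac (n + 1) x,
      isProbabilityMeasure_birkhoffAverage_dirac f x n.succ_ne_zero⟩
  let 𝒰 := Ultrafilter.of (atTop : Filter ℕ)
  let μ := (𝒰.map ν).lim
  have hν : Tendsto ν 𝒰 (𝓝 μ) := Ultrafilter.le_nhds_lim _
  refine ⟨μ, inferInstance, ?_⟩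
  have : IsProbabilityMeasure ((μ : Measure X).map f) :=
    Measure.isProbabilityMeasure_map hf.aemeasurable
  refine ext_of_forall_integral_eq_of_IsFiniteMeasure fun g => ?_
  rw [integral_map hf.aemeasurable g.continuous.aestronglyMeasurable]
  let gf := g.compContinuous ⟨f, hf⟩
  let Φ : ProbabilityMeasure X → ℝ := fun μ => ∫ y, gf y ∂μ - ∫ y, g y ∂μ
  have hΦ : Continuous Φ :=
    (ProbabilityMeasure.continuous_integral_boundedContinuousFunction gf).sub
      (ProbabilityMeasure.continuous_integral_boundedContinuousFunction g)
  have hΦν : Tendsto (Φ ∘ ν) 𝒰 (𝓝 0) := by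
    have := (tendsto_birkhoffAverage_apply_sub_birkhoffAverage' (𝕜 := ℝ) g.isBounded_range f x).comp
      (tendsto_add_atTop_nat 1)
    refine (this.mono_left (Ultrafilter.of_le _)).congr fun n => ?_
    change _ = Φ (ν n)
    simp only [comp_apply, birkhoffAverage_apply_eq_comp, Φ, ν, ProbabilityMeasure.coe_mk,
      integral_birkhoffAverage_dirac]
    rfl
  exact sub_eq_zero.mp (tendsto_nhds_unique ((hΦ.tendsto μ).comp hν) hΦν)

end KrylovBogolyubov

theorem exists_isProbabilityMeasure_map_eq_of_mapsTo {X : Type*} [MetricSpace X] [CompactSpace X]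
    [MeasurableSpace X] [BorelSpace X] {f : X → X} (hf : Continuous f) {M : Set X}
    (hM : IsClosed M) (hne : M.Nonempty) (hfM : MapsTo f M M) :
    ∃ μ : Measure X, IsProbabilityMeasure μ ∧ μ.map f = μ ∧ μ Mᶜ = 0 := by
  have : CompactSpace M := isCompact_iff_compactSpace.mp hM.isCompact
  obtain ⟨x, hx⟩ := hne
  have hfM_cont : Continuous hfM.restrict := hf.restrict hfM
  obtain ⟨ν, _, hνf⟩ := exists_isProbabilityMeasure_map_eq hfM_cont ⟨x, hx⟩
  refine ⟨ν.map (↑), Measure.isProbabilityMeasure_map measurable_subtype_coe.aemeasurable, ?_, ?_⟩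
  · calc (ν.map (↑)).map f = ν.map ((↑) ∘ hfM.restrict) :=
          Measure.map_map hf.measurable measurable_subtype_coe
      _ = ν.map (↑) := by
          rw [← Measure.map_map measurable_subtype_coe hfM_cont.measurable, hνf]
  · rw [Measure.map_apply measurable_subtype_coe hM.measurableSet.compl]
    simp

theorem measSupport_eq_support {X : Type*} [TopologicalSpace X] [MeasurableSpace X]
    (μ : Measure X) : measSupport μ = μ.support :=
  ext fun x => (Measure.mem_support_iff_forall x).symm

theorem inter_nonempty_of_forall_invariant_measSupport_subset {X : Type*} [MetricSpace X]
    [CompactSpace X] [MeasurableSpace X] [BorelSpace X] {f : X → X} (hf : Continuous f)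
    {M F : Set X} (hM : IsClosed M) (hne : M.Nonempty) (hfM : MapsTo f M M)
    (hF : ∀ μ : Measure X, IsProbabilityMeasure μ →
      (∀ s : Set X, MeasurableSet s → μ (f ⁻¹' s) = μ s) → measSupport μ ⊆ F) :
    (M ∩ F).Nonempty := by
  obtain ⟨μ, hμ, hμf, hμM⟩ := exists_isProbabilityMeasure_map_eq_of_mapsTo hf hM hne hfM
  have hinv : ∀ s : Set X, MeasurableSet s → μ (f ⁻¹' s) = μ s := fun s hs => by
    rw [← Measure.map_apply hf.measurable hs, hμf]
  obtain ⟨x, hx⟩ := Measure.nonempty_support (IsProbabilityMeasure.ne_zero μ)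
  exact ⟨x, Measure.support_subset_of_isClosed hM (mem_ae_iff.mpr hμM) hx,
    hF μ hμ hinv ((measSupport_eq_support μ).symm ▸ hx)⟩

theorem exists_subset_preimage_eq_of_preimage_subset {X : Type*} [TopologicalSpace X]
    [CompactSpace X] {g : X → X} (hg : Continuous g) (hsurj : Surjective g) {F : Set X}
    (hF : IsClosed F) (hne : F.Nonempty) (hgF : g ⁻¹' F ⊆ F) :
    ∃ K ⊆ F, K.Nonempty ∧ IsClosed K ∧ g ⁻¹' K = K := by
  set t : ℕ → Set X := fun k => g^[k] ⁻¹' F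
  have ht_succ : ∀ k, t (k + 1) = g ⁻¹' t k := fun k => by
    simp only [t, iterate_succ, preimage_comp]
  have ht_closed : ∀ k, IsClosed (t k) := fun k => hF.preimage (hg.iterate k)
  have ht_anti : Antitone t := antitone_nat_of_succ_le fun k => by
    simp only [t, iterate_succ', preimage_comp]
    exact preimage_mono hgF
  refine ⟨⋂ k, t k, iInter_subset t 0, ?_, isClosed_iInter ht_closed, ?_⟩
  · exact IsCompact.nonempty_iInter_of_sequence_nonempty_isCompact_isClosed t
      (fun k => ht_anti k.le_succ) (fun k => hne.preimage (hsurj.iterate k))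
      (ht_closed 0).isCompact ht_closed
  · simp only [preimage_iInter, ← ht_succ]
    exact ht_anti.iInter_nat_add 1

theorem Function.Semiconj.preimage_inter_fixedPoints_subset {X : Type*} {f h : X → X} {n : ℕ}
    (hsc : Semiconj h f f^[n]) (hinj : Injective h) {M : Set X} (hM : h '' M = M) :
    h ⁻¹' (M ∩ {x | f x = x}) ⊆ M ∩ {x | f x = x} := by
  rintro x ⟨hxM, hfx⟩
  refine ⟨hinj.mem_set_image.mp (hM.symm ▸ hxM), hinj ?_⟩
  rw [hsc x]
  exact iterate_fixed hfx n

theorem bs_minimal_sets_in_fix_of_measure_condition_general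
    {X : Type*} [MetricSpace X] [CompactSpace X]
    [MeasurableSpace X] [BorelSpace X]
    (n : ℕ) (f h : X ≃ₜ X)
    (hrel : ∀ x : X, h (f (h.symm x)) = (⇑f)^[n] x)
    (hsupp : ∀ μ : Measure X, IsProbabilityMeasure μ →
      (∀ s : Set X, MeasurableSet s → μ (⇑f ⁻¹' s) = μ s) →
      measSupport μ ⊆ {x : X | f x = x}) :
    ∀ M : Set X, IsBSMinimal (⇑f) (⇑h) M →
      M ⊆ {x : X | f x = x} ∧ IsMinimalFor (⇑h) M := by
  rintro M ⟨hMne, hMc, hfM, hhM, hmin⟩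
  have hsc : Semiconj h f (⇑f)^[n] := fun x => by simpa using hrel (h x)
  have hfix : M ⊆ {x | f x = x} := by
    obtain ⟨K, hKF, hKne, hKc, hK⟩ := exists_subset_preimage_eq_of_preimage_subset h.continuous
      h.surjective (hMc.inter (isClosed_eq f.continuous continuous_id))
      (inter_nonempty_of_forall_invariant_measSupport_subset f.continuous hMc hMne
        ((mapsTo_image f M).mono_right hfM.le) hsupp)
      (hsc.preimage_inter_fixedPoints_subset h.injective hhM)
    have hhK : h '' K = K := by simpa only [hK] using h.surjective.image_preimage K
    have hKM : K = M := hmin K (hKF.trans inter_subset_left) hKne hKc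
      (EqOn.image_eq_self fun x hx => (hKF hx).2) hhK
    exact hKM ▸ fun x hx => (hKF hx).2
  exact ⟨hfix, hMne, hMc, hhM, fun K hKM hKne hKc hhK =>
    hmin K hKM hKne hKc (EqOn.image_eq_self fun x hx => hfix (hKM hx)) hhK⟩

/-- if every `f`-invariant Borel probability measure has support contained
in `fix(f)`, then every BS-minimal set is contained in `fix(f)` and is an `h`-minimal
set. -/
theorem bs_minimal_sets_in_fix_of_measure_condition
    {X : Type*} [MetricSpace X] [CompactSpace X] [Nonempty X]
    [MeasurableSpace X] [BorelSpace X]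
    (n : ℕ) (hn : 2 ≤ n) (f h : X ≃ₜ X)
    (hrel : ∀ x : X, h (f (h.symm x)) = (⇑f)^[n] x)
    (hsupp : ∀ μ : Measure X, IsProbabilityMeasure μ →
      (∀ s : Set X, MeasurableSet s → μ (⇑f ⁻¹' s) = μ s) →
      measSupport μ ⊆ {x : X | f x = x}) :
    ∀ M : Set X, IsBSMinimal (⇑f) (⇑h) M →
      M ⊆ {x : X | f x = x} ∧ IsMinimalFor (⇑h) M :=
  bs_minimal_sets_in_fix_of_measure_condition_general n f h hrel hsupp
end

section
/- Let n ≥ 2 be an integer and let A, B ∈ GL(2, ℤ) satisfy B A B⁻¹ = Aⁿ. Then there exists N ∈ {1, 2, 3, 4, 6} such that A^N is the identity matrix. -/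
/-!
Conjugate matrices have equal traces, so `tr (A ^ n) = tr A`. For `d = det A = ±1` and
`t = tr A`, Cayley–Hamilton gives `tr (A ^ (k + 2)) = t * tr (A ^ (k + 1)) - d * tr (A ^ k)`,
and this sequence grows strictly in absolute value unless `d = 1, |t| ≤ 2` or `d = -1, t = 0`.
If `|t| ≤ 1` or `d = -1`, the characteristic polynomial divides `X ^ N - 1` for some
`N ∈ {2, 3, 4, 6}`. If `t = ±2`, then `A ^ 2 = 1 + U` with `U ^ 2 = 0`, and `B` conjugates `U`
to `n • U`; iterating, every entry of `U` is divisible by every power of `n`, so `U = 0`.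
-/

open Polynomial

lemma one_add_pow_of_sq_eq_zero {R : Type*} [Ring R] {u : R} (hu : u ^ 2 = 0) (n : ℕ) :
    (1 + u) ^ n = 1 + n * u := by
  induction n with
  | zero => simp
  | succ n ih =>
    rw [pow_succ, ih, Nat.cast_succ]
    simp only [mul_add, add_mul, mul_one, one_mul, mul_assoc, ← sq, hu, mul_zero]
    abel

lemma Int.lt_apply_add_two_of_rec_add {a : ℤ} {r : ℕ → ℤ} (ha : 1 ≤ a) (h0 : 0 < r 0)
    (h1 : r 1 = a) (hr : ∀ k, r (k + 2) = a * r (k + 1) + r k) (k : ℕ) : a < r (k + 2) := by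
  have hpos : ∀ k, 0 < r k ∧ 0 < r (k + 1) := by
    intro k
    induction k with
    | zero => exact ⟨h0, by rw [zero_add]; omega⟩
    | succ k ih => exact ⟨ih.2, by rw [hr]; nlinarith [ih.1, ih.2]⟩
  induction k with
  | zero => rw [hr, h1]; nlinarith
  | succ k ih => rw [hr]; nlinarith [hpos (k + 1)]

lemma Int.lt_apply_add_two_of_rec_sub {a : ℤ} {r : ℕ → ℤ} (ha : 3 ≤ a) (h0 : r 0 = 2)
    (h1 : r 1 = a) (hr : ∀ k, r (k + 2) = a * r (k + 1) - r k) (k : ℕ) : a < r (k + 2) := by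
  have hmono : ∀ k, 0 ≤ r k ∧ r k ≤ r (k + 1) := by
    intro k
    induction k with
    | zero => exact ⟨by omega, by rw [zero_add]; omega⟩
    | succ k ih => exact ⟨by linarith [ih.1, ih.2], by rw [hr]; nlinarith [ih.1, ih.2]⟩
  calc a < r 2 := by rw [hr, h1, h0]; nlinarith
    _ ≤ r (k + 2) := monotone_nat_of_le_succ (fun k => (hmono k).2) (by omega)

namespace Matrix

lemma eq_zero_of_forall_exists_eq_pow_smul {ι κ : Type*} {m : ℤ} (hm : m.natAbs ≠ 1)
    {U : Matrix ι κ ℤ} (h : ∀ k : ℕ, ∃ V, U = m ^ k • V) : U = 0 := by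
  ext i j
  by_contra hU
  obtain ⟨k, hk⟩ := Int.finiteMultiplicity_iff.2 ⟨hm, hU⟩
  obtain ⟨V, hV⟩ := h (k + 1)
  exact hk ⟨V i j, by simp [hV]⟩

variable {ι : Type*} [Fintype ι] [DecidableEq ι]

lemma eq_zero_of_conj_eq_smul {m : ℤ} (hm : m.natAbs ≠ 1) {P Q U : Matrix ι ι ℤ}
    (hQP : Q * P = 1) (h : P * U * Q = m • U) : U = 0 := by
  have hU : U = m • (Q * U * P) := by
    calc U = Q * P * U * (Q * P) := by rw [hQP, one_mul, mul_one]
      _ = Q * (P * U * Q) * P := by simp only [mul_assoc]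
      _ = m • (Q * U * P) := by rw [h, mul_smul_comm, smul_mul_assoc]
  refine eq_zero_of_forall_exists_eq_pow_smul hm fun k => ?_
  induction k with
  | zero => exact ⟨U, by rw [pow_zero, one_smul]⟩
  | succ k ih =>
    obtain ⟨V, hV⟩ := ih
    refine ⟨Q * V * P, ?_⟩
    calc U = m • (Q * (m ^ k • V) * P) := by rw [← hV, ← hU]
      _ = m ^ (k + 1) • (Q * V * P) := by
        rw [mul_smul_comm, smul_mul_assoc, smul_smul, pow_succ']

theorem GeneralLinearGroup.eq_one_of_conj_eq_pow_of_sub_one_sq_eq_zero {n : ℕ} (hn : n ≠ 1)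
    {A B : GL ι ℤ} (h : B * A * B⁻¹ = A ^ n) (hA : ((A : Matrix ι ι ℤ) - 1) ^ 2 = 0) :
    A = 1 := by
  set U := (A : Matrix ι ι ℤ) - 1
  have hAU : (A : Matrix ι ι ℤ) = 1 + U := by simp [U]
  have hconj : (B : Matrix ι ι ℤ) * U * (↑B⁻¹ : Matrix ι ι ℤ) = (n : ℤ) • U := by
    have := congrArg Units.val h
    rw [Units.val_mul, Units.val_mul, Units.val_pow_eq_pow_val, hAU,
      one_add_pow_of_sq_eq_zero hA] at this
    simpa [mul_add, add_mul] using this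
  have hU : U = 0 := eq_zero_of_conj_eq_smul (by omega) B.inv_mul hconj
  ext1
  simpa [U, sub_eq_zero] using hU

lemma sq_eq_trace_smul_sub_det_smul {R : Type*} [CommRing R] (M : Matrix (Fin 2) (Fin 2) R) :
    M ^ 2 = M.trace • M - M.det • 1 := by
  ext i j
  fin_cases i <;> fin_cases j <;>
    simp [sq, mul_apply, trace_fin_two, det_fin_two] <;> ring

lemma trace_pow_add_two {R : Type*} [CommRing R] (M : Matrix (Fin 2) (Fin 2) R) (k : ℕ) :
    (M ^ (k + 2)).trace = M.trace * (M ^ (k + 1)).trace - M.det * (M ^ k).trace := by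
  rw [pow_add, sq_eq_trace_smul_sub_det_smul, mul_sub, mul_smul_comm, mul_smul_comm, mul_one,
    ← pow_succ, trace_sub, trace_smul, trace_smul, smul_eq_mul, smul_eq_mul]

lemma trace_lt_trace_pow_add_two {M : Matrix (Fin 2) (Fin 2) ℤ}
    (hM : (M.det = -1 ∧ 1 ≤ M.trace) ∨ (M.det = 1 ∧ 3 ≤ M.trace)) (k : ℕ) :
    M.trace < (M ^ (k + 2)).trace := by
  rcases hM with ⟨hd, ht⟩ | ⟨hd, ht⟩
  · refine Int.lt_apply_add_two_of_rec_add (r := fun k => (M ^ k).trace) ht (by simp) (by simp)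
      (fun k => ?_) k
    simp [trace_pow_add_two, hd]
  · refine Int.lt_apply_add_two_of_rec_sub (r := fun k => (M ^ k).trace) ht (by simp) (by simp)
      (fun k => ?_) k
    simp [trace_pow_add_two, hd]

lemma abs_trace_lt_abs_trace_pow_add_two {M : Matrix (Fin 2) (Fin 2) ℤ}
    (hM : (M.det = -1 ∧ M.trace ≠ 0) ∨ (M.det = 1 ∧ 3 ≤ |M.trace|)) (k : ℕ) :
    |M.trace| < |(M ^ (k + 2)).trace| := by
  wlog ht : 0 < M.trace generalizing M
  · have hne : M.trace ≠ 0 := by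
      rintro h0
      simp [h0] at hM
    have hneg := this (M := -M) (by simpa [det_neg] using hM) (by rw [trace_neg]; omega)
    rwa [← neg_one_smul ℤ M, _root_.smul_pow, trace_smul, trace_smul, abs_smul, abs_smul,
      abs_pow, abs_neg, abs_one, one_pow, one_smul, one_smul] at hneg
  rw [abs_of_pos ht] at hM ⊢
  exact (trace_lt_trace_pow_add_two (by omega) k).trans_le (le_abs_self _)

lemma det_trace_cases_of_trace_pow_eq {M : Matrix (Fin 2) (Fin 2) ℤ}
    (hdet : M.det = 1 ∨ M.det = -1) {n : ℕ} (hn : 2 ≤ n) (h : (M ^ n).trace = M.trace) :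
    (M.det = 1 ∧ |M.trace| = 2) ∨ (M.det = 1 ∧ |M.trace| ≤ 1) ∨
      (M.det = -1 ∧ M.trace = 0) := by
  obtain ⟨k, rfl⟩ := Nat.exists_eq_add_of_le' hn
  by_contra! hM
  have := abs_trace_lt_abs_trace_pow_add_two (M := M) (by omega) k
  rw [h] at this
  exact lt_irrefl _ this

lemma sq_sub_one_sq_eq_zero {M : Matrix (Fin 2) (Fin 2) ℤ} (hd : M.det = 1)
    (ht : |M.trace| = 2) : (M ^ 2 - 1) ^ 2 = 0 := by
  have hdvd : M.charpoly ∣ (X ^ 2 - 1) ^ 2 := by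
    rw [charpoly_fin_two, hd]
    rcases (abs_eq zero_le_two).1 ht with ht | ht <;> rw [ht]
    · exact ⟨(X + 1) ^ 2, by simp; ring⟩
    · exact ⟨(X - 1) ^ 2, by simp; ring⟩
  simpa using aeval_eq_zero_of_dvd_aeval_eq_zero hdvd M.aeval_self_charpoly

lemma exists_pow_eq_one_of_abs_trace_le_one {M : Matrix (Fin 2) (Fin 2) ℤ}
    (hM : (M.det = 1 ∧ |M.trace| ≤ 1) ∨ (M.det = -1 ∧ M.trace = 0)) :
    ∃ N ∈ ({1, 2, 3, 4, 6} : Set ℕ), M ^ N = 1 := by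
  suffices ∃ N ∈ ({1, 2, 3, 4, 6} : Set ℕ), M.charpoly ∣ X ^ N - 1 by
    obtain ⟨N, hN, hdvd⟩ := this
    exact ⟨N, hN, by simpa [sub_eq_zero] using
      aeval_eq_zero_of_dvd_aeval_eq_zero hdvd M.aeval_self_charpoly⟩
  rw [charpoly_fin_two]
  obtain ⟨hd, ht | ht | ht⟩ | ⟨hd, ht⟩ :
      (M.det = 1 ∧ (M.trace = -1 ∨ M.trace = 0 ∨ M.trace = 1)) ∨
        (M.det = -1 ∧ M.trace = 0) := by
    rw [abs_le] at hM
    omega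
  all_goals rw [hd, ht]
  · exact ⟨3, by simp, X - 1, by simp; ring⟩
  · exact ⟨4, by simp, X ^ 2 - 1, by simp; ring⟩
  · exact ⟨6, by simp, X ^ 4 + X ^ 3 - X - 1, by simp; ring⟩
  · exact ⟨2, by simp, 1, by simp; ring⟩

end Matrix

/-- if `A, B ∈ GL(2, ℤ)` satisfy `B A B⁻¹ = Aⁿ` with `n ≥ 2`, then
`A^N = 1` for some `N ∈ {1, 2, 3, 4, 6}`. -/
theorem bs_homology_matrix_finite_order
    (n : ℕ) (hn : 2 ≤ n) (A B : Matrix.GeneralLinearGroup (Fin 2) ℤ)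
    (hrel : B * A * B⁻¹ = A ^ n) :
    ∃ N ∈ ({1, 2, 3, 4, 6} : Set ℕ), A ^ N = 1 := by
  have hdet :
      (A : Matrix (Fin 2) (Fin 2) ℤ).det = 1 ∨ (A : Matrix (Fin 2) (Fin 2) ℤ).det = -1 :=
    Int.isUnit_iff.1 (Matrix.isUnits_det_units A)
  have htr :
      ((A : Matrix (Fin 2) (Fin 2) ℤ) ^ n).trace = (A : Matrix (Fin 2) (Fin 2) ℤ).trace := by
    rw [← Units.val_pow_eq_pow_val, ← hrel, Units.val_mul, Units.val_mul,
      Matrix.trace_units_conj]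
  rcases Matrix.det_trace_cases_of_trace_pow_eq hdet hn htr with ⟨hd, ht⟩ | hM
  · refine ⟨2, by simp,
      Matrix.GeneralLinearGroup.eq_one_of_conj_eq_pow_of_sub_one_sq_eq_zero (n := n) (B := B)
        (by omega) ?_ ?_⟩
    · rw [← conj_pow, hrel, ← pow_mul, ← pow_mul, mul_comm]
    · simpa using Matrix.sq_sub_one_sq_eq_zero hd ht
  · obtain ⟨N, hN, hAN⟩ := Matrix.exists_pow_eq_one_of_abs_trace_le_one hM
    exact ⟨N, hN, Units.ext (by simpa using hAN)⟩
end

section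
/- Let n ≥ 2 be an integer, let ε ∈ {1, −1}, and let A = [[ε, 1], [0, ε]] ∈ GL(2, ℤ). Then there is no matrix B ∈ GL(2, ℤ) such that B A B⁻¹ = Aⁿ. -/
/-! Conjugation preserves the trace, so `2ε = 2εⁿ`, hence `εⁿ = ε` and `Aⁿ = [[ε, n], [0, ε]]`.
If `B = [[a, b], [c, d]]` satisfies `B A = Aⁿ B`, comparing the second column gives `c = 0` and
`a = n d`, so `det B = n d²`. As `det B = ±1`, `n` would be a unit of `ℤ`, which fails for `n ≥ 2`. -/

open Matrix

theorem jordanBlock_two_pow_succ {R : Type*} [CommSemiring R] (ε : R) (k : ℕ) :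
    !![ε, 1; 0, ε] ^ (k + 1) = !![ε ^ (k + 1), (k + 1) * ε ^ k; 0, ε ^ (k + 1)] := by
  induction k with
  | zero => simp
  | succ k ih =>
    rw [pow_succ, ih, mul_fin_two]
    simp only [Nat.cast_add, Nat.cast_one, mul_zero, zero_mul, add_zero, zero_add, mul_one,
      ← pow_succ]
    congr
    ring

theorem isUnit_of_semiconjBy_jordanBlock {R : Type*} [CommRing R] {B : Matrix (Fin 2) (Fin 2) R}
    (hB : IsUnit B) {ε m : R} (h : SemiconjBy B !![ε, 1; 0, ε] !![ε, m; 0, ε]) : IsUnit m := by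
  have h01 := congrFun (congrFun h 0) 1
  have h11 := congrFun (congrFun h 1) 1
  simp only [mul_apply, Fin.sum_univ_two, of_apply, cons_val', cons_val_zero,
    cons_val_one, empty_val', cons_val_fin_one] at h01 h11
  have hc : B 1 0 = 0 := by linear_combination h11
  have ha : B 0 0 = m * B 1 1 := by linear_combination h01
  have hdet : B.det = m * (B 1 1 * B 1 1) := by rw [det_fin_two, hc, ha]; ring
  exact isUnit_of_mul_isUnit_left (hdet ▸ (isUnit_iff_isUnit_det B).mp hB)

/-- for `n ≥ 2` and `ε ∈ {1, -1}`, the matrix `A = [[ε, 1], [0, ε]]` is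
not conjugate in `GL(2, ℤ)` to its `n`-th power. -/
theorem bs_unipotent_matrix_not_conjugate_to_power
    (n : ℕ) (hn : 2 ≤ n) (ε : ℤ) (hε : ε = 1 ∨ ε = -1) :
    ¬ ∃ B : Matrix.GeneralLinearGroup (Fin 2) ℤ,
      (B : Matrix (Fin 2) (Fin 2) ℤ) * !![ε, 1; 0, ε] *
        ((B⁻¹ : Matrix.GeneralLinearGroup (Fin 2) ℤ) : Matrix (Fin 2) (Fin 2) ℤ) =
      !![ε, 1; 0, ε] ^ n := by
  rintro ⟨B, hB⟩
  obtain ⟨k, rfl⟩ : ∃ k, n = k + 1 := ⟨n - 1, by omega⟩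
  have hpow : ε ^ k = 1 := by
    have htr := congrArg trace hB
    rw [trace_units_conj, jordanBlock_two_pow_succ, trace_fin_two_of, trace_fin_two_of] at htr
    have hε0 : ε ≠ 0 := by rcases hε with rfl | rfl <;> norm_num
    exact mul_left_cancel₀ hε0 (by rw [← pow_succ']; linarith)
  have hsemi :
      SemiconjBy (B : Matrix (Fin 2) (Fin 2) ℤ) !![ε, 1; 0, ε] !![ε, (k + 1 : ℤ); 0, ε] := by
    have := (Units.mul_inv_eq_iff_eq_mul B).mp hB
    rwa [jordanBlock_two_pow_succ, pow_succ, hpow, one_mul, mul_one] at this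
  have := Int.isUnit_iff.mp (isUnit_of_semiconjBy_jordanBlock B.isUnit hsemi)
  omega
end

section
/- Let F be a homeomorphism of ℝ² satisfying F(x + P) = F(x) + P for all x ∈ ℝ² and P ∈ ℤ², and let H be a homeomorphism of ℝ² for which there is a matrix A_H ∈ GL(2, ℤ) with H(x + P) = H(x) + A_H · P for all x ∈ ℝ² and P ∈ ℤ². Then the rotation set of H ∘ F ∘ H⁻¹ equals the image of the rotation set of F under the linear map A_H, i.e., ρ(H ∘ F ∘ H⁻¹) = A_H(ρ(F)). -/
open Filter Topology

/-- The rotation set of a map `G : ℝ² → ℝ²` (commuting with integer translations):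
the set of vectors `v` for which there are points `xᵢ` and positive integers `mᵢ → ∞`
with `(G^{mᵢ}(xᵢ) − xᵢ)/mᵢ → v`. -/
def rotSet (G : ℝ × ℝ → ℝ × ℝ) : Set (ℝ × ℝ) :=
  {v | ∃ (x : ℕ → ℝ × ℝ) (m : ℕ → ℕ), (∀ i, 0 < m i) ∧ Tendsto m atTop atTop ∧
    Tendsto (fun i => ((m i : ℝ))⁻¹ • (G^[m i] (x i) - x i)) atTop (nhds v)}

/-- The linear action of an integer 2×2 matrix on `ℝ²`. -/
def matAct (A : Matrix (Fin 2) (Fin 2) ℤ) (v : ℝ × ℝ) : ℝ × ℝ :=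
  ((A 0 0 : ℝ) * v.1 + (A 0 1 : ℝ) * v.2, (A 1 0 : ℝ) * v.1 + (A 1 1 : ℝ) * v.2)

/-!
A homeomorphism `H` with `H (x + P) = H x + A P` stays within bounded distance of the linear
map `A`, since `H - A` is continuous and `ℤ²`-periodic. It semiconjugates `F` to
`G = H ∘ F ∘ H⁻¹`, so the displacements of `G^[n]` are the images under `A` of those of `F^[n]`
up to a bounded error, which disappears after division by `n`; hence `A (ρ F) ⊆ ρ G`.
Since `det A = ±1`, `A⁻¹` is an integer matrix and `H⁻¹` satisfies the same relation with `A⁻¹`,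
which gives `A⁻¹ (ρ G) ⊆ ρ F`.
-/

section matAct

variable (A B : Matrix (Fin 2) (Fin 2) ℤ)

lemma matAct_add (u v : ℝ × ℝ) : matAct A (u + v) = matAct A u + matAct A v := by
  simp only [matAct, Prod.fst_add, Prod.snd_add, Prod.mk_add_mk]
  congr 1 <;> ring

lemma matAct_smul (c : ℝ) (u : ℝ × ℝ) : matAct A (c • u) = c • matAct A u := by
  simp only [matAct, Prod.smul_fst, Prod.smul_snd, Prod.smul_mk, smul_eq_mul]
  congr 1 <;> ring

noncomputable def matActL : ℝ × ℝ →L[ℝ] ℝ × ℝ :=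
  LinearMap.toContinuousLinearMap
    { toFun := matAct A, map_add' := matAct_add A, map_smul' := matAct_smul A }

@[simp]
lemma coe_matActL : ⇑(matActL A) = matAct A := rfl

lemma matAct_matAct (v : ℝ × ℝ) : matAct A (matAct B v) = matAct (A * B) v := by
  simp only [matAct, Matrix.mul_apply, Fin.sum_univ_two, Int.cast_add, Int.cast_mul]
  congr 1 <;> ring

@[simp]
lemma matAct_one (v : ℝ × ℝ) : matAct 1 v = v := by
  simp [matAct]

lemma matAct_intCast (p q : ℤ) :
    matAct A ((p : ℝ), (q : ℝ)) =
      (((A 0 0 * p + A 0 1 * q : ℤ) : ℝ), ((A 1 0 * p + A 1 1 * q : ℤ) : ℝ)) := by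
  simp [matAct]

end matAct

/-- `H` is a lift of a torus map acting by `A` on `π₁(T²) = ℤ²`. -/
def LatticeEquivariant (A : Matrix (Fin 2) (Fin 2) ℤ) (H : ℝ × ℝ → ℝ × ℝ) : Prop :=
  ∀ (x : ℝ × ℝ) (p q : ℤ), H (x + ((p : ℝ), (q : ℝ))) = H x + matAct A ((p : ℝ), (q : ℝ))

lemma exists_norm_le_of_periodic {E : Type*} [SeminormedAddGroup E] {g : ℝ × ℝ → E}
    (hg : Continuous g) (hper : ∀ (x : ℝ × ℝ) (p q : ℤ), g (x + ((p : ℝ), (q : ℝ))) = g x) :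
    ∃ C, ∀ x, ‖g x‖ ≤ C := by
  obtain ⟨C, hC⟩ :=
    (isCompact_Icc (a := ((0 : ℝ), (0 : ℝ))) (b := (1, 1))).exists_bound_of_continuousOn
      hg.continuousOn
  refine ⟨C, fun x => ?_⟩
  have hfract : (Int.fract x.1, Int.fract x.2) ∈ Set.Icc ((0 : ℝ), (0 : ℝ)) (1, 1) :=
    ⟨⟨Int.fract_nonneg _, Int.fract_nonneg _⟩, ⟨(Int.fract_lt_one _).le, (Int.fract_lt_one _).le⟩⟩
  have hx : (Int.fract x.1, Int.fract x.2) + ((⌊x.1⌋ : ℝ), (⌊x.2⌋ : ℝ)) = x :=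
    Prod.ext (Int.fract_add_floor _) (Int.fract_add_floor _)
  rw [← hx, hper]
  exact hC _ hfract

namespace LatticeEquivariant

variable {A B : Matrix (Fin 2) (Fin 2) ℤ}

lemma exists_norm_sub_matAct_le {H : ℝ × ℝ → ℝ × ℝ} (hH : LatticeEquivariant A H)
    (hcont : Continuous H) : ∃ C, ∀ x, ‖H x - matAct A x‖ ≤ C :=
  exists_norm_le_of_periodic (hcont.sub (matActL A).continuous) fun x p q => by
    rw [hH, matAct_add]
    abel

lemma symm {H : ℝ × ℝ ≃ ℝ × ℝ} (hAB : A * B = 1) (hH : LatticeEquivariant A H) :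
    LatticeEquivariant B H.symm := by
  intro y p q
  rw [H.symm_apply_eq, matAct_intCast B, hH, ← matAct_intCast, matAct_matAct, hAB, matAct_one,
    H.apply_symm_apply]

end LatticeEquivariant

lemma image_rotSet_subset_of_semiconj {G₁ G₂ h : ℝ × ℝ → ℝ × ℝ} (L : ℝ × ℝ →L[ℝ] ℝ × ℝ)
    (hsemi : Function.Semiconj h G₁ G₂) {C : ℝ} (hC : ∀ x, ‖h x - L x‖ ≤ C) :
    L '' rotSet G₁ ⊆ rotSet G₂ := by
  rintro _ ⟨v, ⟨x, m, hmpos, hm, hconv⟩, rfl⟩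
  refine ⟨fun i => h (x i), m, hmpos, hm, ?_⟩
  set e : ℝ × ℝ → ℝ × ℝ := fun y => h y - L y
  have hdisp : ∀ i, ((m i : ℝ))⁻¹ • (G₂^[m i] (h (x i)) - h (x i)) =
      L (((m i : ℝ))⁻¹ • (G₁^[m i] (x i) - x i)) +
        ((m i : ℝ))⁻¹ • (e (G₁^[m i] (x i)) - e (x i)) := fun i => by
    rw [← (hsemi.iterate_right (m i)).eq, map_smul, map_sub, ← smul_add]
    congr 1
    simp only [e]
    abel
  have herror : Tendsto (fun i => ((m i : ℝ))⁻¹ • (e (G₁^[m i] (x i)) - e (x i)))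
      atTop (𝓝 0) :=
    (tendsto_inv_atTop_zero.comp (tendsto_natCast_atTop_atTop.comp hm))
      |>.zero_smul_isBoundedUnder_le (isBoundedUnder_of ⟨2 * C, fun i =>
        (norm_sub_le _ _).trans (by linarith [hC (G₁^[m i] (x i)), hC (x i)])⟩)
  simpa only [hdisp, add_zero, Function.comp_def] using
    ((L.continuous.tendsto v).comp hconv).add herror

theorem rotation_set_of_conjugate_general
    (F H : (ℝ × ℝ) ≃ₜ (ℝ × ℝ)) (A : Matrix (Fin 2) (Fin 2) ℤ)
    (hA : A.det = 1 ∨ A.det = -1)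
    (hH : ∀ (x : ℝ × ℝ) (p q : ℤ),
      H (x + ((p : ℝ), (q : ℝ))) = H x + matAct A ((p : ℝ), (q : ℝ))) :
    rotSet (fun x => H (F (H.symm x))) = matAct A '' rotSet ⇑F := by
  have hAinv : A * A⁻¹ = 1 := A.mul_nonsing_inv (Int.isUnit_iff.mpr hA)
  obtain ⟨C, hC⟩ := LatticeEquivariant.exists_norm_sub_matAct_le hH H.continuous
  obtain ⟨C', hC'⟩ := LatticeEquivariant.exists_norm_sub_matAct_le
    (LatticeEquivariant.symm (H := H.toEquiv) hAinv hH) H.symm.continuous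
  have hforward : matAct A '' rotSet ⇑F ⊆ rotSet (fun x => H (F (H.symm x))) :=
    image_rotSet_subset_of_semiconj (matActL A) (fun x => by simp) hC
  have hbackward : matAct A⁻¹ '' rotSet (fun x => H (F (H.symm x))) ⊆ rotSet ⇑F :=
    image_rotSet_subset_of_semiconj (h := H.symm) (matActL A⁻¹) (fun x => by simp) hC'
  refine subset_antisymm (fun v hv => ⟨matAct A⁻¹ v, hbackward ⟨v, hv, rfl⟩, ?_⟩) hforward
  rw [matAct_matAct, hAinv, matAct_one]

/-- if `F` commutes with integer translations and `H` satisfies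
`H(x + P) = H(x) + A_H·P` with `A_H ∈ GL(2, ℤ)`, then
`ρ(H ∘ F ∘ H⁻¹) = A_H(ρ(F))`. -/
theorem rotation_set_of_conjugate
    (F H : (ℝ × ℝ) ≃ₜ (ℝ × ℝ)) (A : Matrix (Fin 2) (Fin 2) ℤ)
    (hA : A.det = 1 ∨ A.det = -1)
    (hF : ∀ (x : ℝ × ℝ) (p q : ℤ),
      F (x + ((p : ℝ), (q : ℝ))) = F x + ((p : ℝ), (q : ℝ)))
    (hH : ∀ (x : ℝ × ℝ) (p q : ℤ),
      H (x + ((p : ℝ), (q : ℝ))) = H x + matAct A ((p : ℝ), (q : ℝ))) :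
    rotSet (fun x => H (F (H.symm x))) = matAct A '' rotSet ⇑F :=
  rotation_set_of_conjugate_general F H A hA hH
end

section
/- Let n ≥ 2 be an integer and let X = (ℝ ∪ {∞}) × S¹ be the product of the one-point compactification of ℝ and the circle ℝ/ℤ. Let α be irrational, and let f, h be homeomorphisms of X satisfying f(x, θ) = (x + 1, θ) and h(x, θ) = (n·x, θ + α) for all x ∈ ℝ and θ ∈ S¹ (so f(∞, θ) = (∞, θ) and h(∞, θ) = (∞, θ + α)). Then: (i) there is no nonempty finite subset S ⊆ X with f(S) = S and h(S) = S (no finite orbit of the action); and (ii) the circle C₁ = {∞} × S¹ satisfies f(C₁) = C₁ and h(C₁) = C₁, and every nonempty closed subset K ⊆ X with f(K) = K and h(K) = K contains C₁; in particular C₁ is the unique minimal set of the action and it is contained in fix(f). -/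
/-!
Forward `f`-orbits `(x + k, θ)` of finite points converge to `(∞, θ)`, so every closed
`f`-invariant set meets the circle at infinity. On that circle `h` is the rotation by `α`, whose
multiples are dense, and a nonempty closed set invariant under such a rotation is the whole
circle. Hence every nonempty closed invariant set contains `{∞} × S¹`; as finite sets are closed
and this circle is infinite, there is no finite invariant set either.
-/

open OnePoint

abbrev CylSpace : Type := OnePoint ℝ × AddCircle (1 : ℝ)

open Filter Topology Set Function

instance AddCircle.instInfinite {p : ℝ} [hp : Fact (0 < p)] : Infinite (AddCircle p) :=
  haveI := Set.Ico.infinite (lt_add_of_pos_right (0 : ℝ) hp.out)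
  .of_injective _ (AddCircle.equivIco p 0).symm.injective

theorem Function.Periodic.eq_univ_of_isClosed {G : Type*} [AddGroup G] [TopologicalSpace G]
    [ContinuousAdd G] {A : Set G} {β : G} (hper : Periodic (· ∈ A) β)
    (hβ : DenseRange (· • β : ℤ → G)) (hA : IsClosed A) (hne : A.Nonempty) : A = univ := by
  obtain ⟨a, ha⟩ := hne
  refine eq_univ_of_forall fun g => ?_
  have horbit : MapsTo (a + ·) (range (· • β : ℤ → G)) A := by
    rintro _ ⟨k, rfl⟩
    simpa only [hper.zsmul k a] using ha
  simpa using hA.closure_subset (map_mem_closure (continuous_const_add a) (hβ (-a + g)) horbit)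

theorem image_singleton_prod_univ {X Y : Type*} (g : X × Y → X × Y) (x : X) {φ : Y → Y}
    (hg : ∀ y, g (x, y) = (x, φ y)) (hφ : Surjective φ) :
    g '' ({x} ×ˢ univ) = {x} ×ˢ univ := by
  rw [singleton_prod, image_image]
  simp_rw [hg]
  rw [← image_image (Prod.mk x) φ, image_univ_of_surjective hφ]

theorem periodic_mem_of_image_eq {X Y : Type*} [Add Y] {g : X × Y → X × Y} (hg : Injective g)
    {x : X} {β : Y} (hgx : ∀ y, g (x, y) = (x, y + β)) {K : Set (X × Y)} (hK : g '' K = K) :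
    Periodic (fun y => (x, y) ∈ K) β := fun y => by
  simpa only [hK, hgx] using propext (hg.mem_set_image (s := K) (a := (x, y)))

theorem OnePoint.tendsto_coe_add_natCast_infty (x : ℝ) :
    Tendsto (fun k : ℕ => ((x + k : ℝ) : OnePoint ℝ)) atTop (𝓝 ∞) := by
  refine tendsto_coe_infty.comp ?_
  rw [coclosedCompact_eq_cocompact]
  exact (tendsto_atTop_add_const_left _ x tendsto_natCast_atTop_atTop).mono_right
    atTop_le_cocompact

theorem mk_infty_mem_of_mapsTo {f : CylSpace → CylSpace}
    (hf : ∀ (x : ℝ) (θ : AddCircle (1 : ℝ)), f (↑x, θ) = (↑(x + 1), θ))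
    {K : Set CylSpace} (hK : IsClosed K) (hfK : MapsTo f K K) {p : CylSpace} (hp : p ∈ K) :
    ((∞ : OnePoint ℝ), p.2) ∈ K := by
  obtain ⟨u, θ⟩ := p
  induction u using OnePoint.rec with
  | infty => exact hp
  | coe x =>
    have horbit : ∀ k : ℕ, (((x + k : ℝ) : OnePoint ℝ), θ) ∈ K := by
      intro k
      induction k with
      | zero => simpa using hp
      | succ k ih => simpa [hf, add_assoc] using hfK ih
    exact hK.mem_of_tendsto ((tendsto_coe_add_natCast_infty x).prodMk_nhds tendsto_const_nhds)
      (Eventually.of_forall horbit)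

theorem bs_product_action_irrational_rotation_unique_minimal_set_general
    (α : ℝ) (hα : Irrational α)
    (f h : CylSpace ≃ₜ CylSpace)
    (hf : ∀ (x : ℝ) (θ : AddCircle (1 : ℝ)), f (↑x, θ) = (↑(x + 1), θ))
    (hfinf : ∀ θ : AddCircle (1 : ℝ), f (∞, θ) = (∞, θ))
    (hhinf : ∀ θ : AddCircle (1 : ℝ),
      h (∞, θ) = (∞, θ + ((α : ℝ) : AddCircle (1 : ℝ)))) :
    (¬ ∃ S : Set CylSpace, S.Nonempty ∧ S.Finite ∧ ⇑f '' S = S ∧ ⇑h '' S = S) ∧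
    (let C₁ : Set CylSpace := ({∞} : Set (OnePoint ℝ)) ×ˢ Set.univ
     ⇑f '' C₁ = C₁ ∧ ⇑h '' C₁ = C₁ ∧ C₁ ⊆ {p : CylSpace | f p = p} ∧
       ∀ K : Set CylSpace, K.Nonempty → IsClosed K → ⇑f '' K = K → ⇑h '' K = K →
         C₁ ⊆ K) := by
  have hdense : DenseRange (· • (α : AddCircle (1 : ℝ)) : ℤ → AddCircle (1 : ℝ)) :=
    AddCircle.denseRange_zsmul_coe_iff.2 (by simpa using hα)
  have hC₁ : ∀ K : Set CylSpace, K.Nonempty → IsClosed K → ⇑f '' K = K → ⇑h '' K = K →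
      ({∞} : Set (OnePoint ℝ)) ×ˢ univ ⊆ K := by
    rintro K ⟨p, hp⟩ hK hfK hhK ⟨u, θ⟩ ⟨rfl, -⟩
    have hslice : {θ | ((∞ : OnePoint ℝ), θ) ∈ K} = univ :=
      (periodic_mem_of_image_eq h.injective hhinf hhK).eq_univ_of_isClosed hdense
        (hK.preimage (by fun_prop))
        ⟨p.2, mk_infty_mem_of_mapsTo hf hK (mapsTo_iff_image_subset.2 hfK.subset) hp⟩
    exact eq_univ_iff_forall.1 hslice θ
  refine ⟨fun ⟨S, hne, hfin, hfS, hhS⟩ => ?_, image_singleton_prod_univ f ∞ hfinf surjective_id,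
    image_singleton_prod_univ h ∞ hhinf (add_right_surjective _),
    by rintro ⟨_, θ⟩ ⟨rfl, -⟩; exact hfinf θ, hC₁⟩
  exact (infinite_univ.prod_right (singleton_nonempty ∞)).mono
    (hC₁ S hne hfin.isClosed hfS hhS) hfin

/-- for `f(x,θ) = (x+1,θ)` and `h(x,θ) = (nx, θ+α)` with `α` irrational:
(i) there is no nonempty finite subset invariant under both `f` and `h`; and
(ii) the circle `C₁ = {∞} × S¹` is invariant under `f` and `h`, is contained in the
fixed-point set of `f`, and is contained in every nonempty closed subset invariant
under both `f` and `h`; in particular it is the unique minimal set of the action. -/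
theorem bs_product_action_irrational_rotation_unique_minimal_set
    (n : ℕ) (hn : 2 ≤ n) (α : ℝ) (hα : Irrational α)
    (f h : CylSpace ≃ₜ CylSpace)
    (hf : ∀ (x : ℝ) (θ : AddCircle (1 : ℝ)), f (↑x, θ) = (↑(x + 1), θ))
    (hfinf : ∀ θ : AddCircle (1 : ℝ), f (∞, θ) = (∞, θ))
    (hh : ∀ (x : ℝ) (θ : AddCircle (1 : ℝ)),
      h (↑x, θ) = (↑((n : ℝ) * x), θ + ((α : ℝ) : AddCircle (1 : ℝ))))
    (hhinf : ∀ θ : AddCircle (1 : ℝ),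
      h (∞, θ) = (∞, θ + ((α : ℝ) : AddCircle (1 : ℝ)))) :
    (¬ ∃ S : Set CylSpace, S.Nonempty ∧ S.Finite ∧ ⇑f '' S = S ∧ ⇑h '' S = S) ∧
    (let C₁ : Set CylSpace := ({∞} : Set (OnePoint ℝ)) ×ˢ Set.univ
     ⇑f '' C₁ = C₁ ∧ ⇑h '' C₁ = C₁ ∧ C₁ ⊆ {p : CylSpace | f p = p} ∧
       ∀ K : Set CylSpace, K.Nonempty → IsClosed K → ⇑f '' K = K → ⇑h '' K = K →
         C₁ ⊆ K) :=
  bs_product_action_irrational_rotation_unique_minimal_set_general α hα f h hf hfinf hhinf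
end
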